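/- arXiv:1706.08213 — 12 statements merged into one kernel-verified Lean document; each statement's English description precedes it below -/
import Mathlib

section
/- Let S be an idempotent ordered semigroup. The following are equivalent: (1) for all a,b ∈ S there exist x,y ∈ S with a ≤ axbya (S is rectangular); (2) for all a,b ∈ S there exists x ∈ S with a ≤ axbxa; (3) for all a,b,c ∈ S there exists x ∈ S with ac ≤ axbxc. -/
/-- Equivalent characterizations of rectangular idempotent ordered semigroups. -/
theorem rectangular_tfae
    {S : Type*} [Semigroup S] [PartialOrder S]
    [CovariantClass S S (· * ·) (· ≤ ·)]
    [CovariantClass S S (Function.swap (· * ·)) (· ≤ ·)]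
    (hidem : ∀ a : S, a ≤ a * a) :
    List.TFAE
      [∀ a b : S, ∃ x y : S, a ≤ a * x * b * y * a,
       ∀ a b : S, ∃ x : S, a ≤ a * x * b * x * a,
       ∀ a b c : S, ∃ x : S, a * c ≤ a * x * b * x * c] := by
  tfae_have 1 → 2 := by
    intro h1 a b
    obtain ⟨x, y, hxy⟩ := h1 a (b * a)
    refine ⟨x * b * x * b * a * y, ?_⟩
    calc a ≤ a * x * (b * a) * y * a := hxy
      _ = a * ((x * b) * (a * (y * a))) := by simp only [mul_assoc]
      _ ≤ a * (((x * b) * (x * b)) * (a * (y * a))) :=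
          mul_le_mul_right (mul_le_mul_left (hidem (x * b)) _) _
      _ = a * (x * ((b * (x * (b * (a * y)))) * a)) := by simp only [mul_assoc]
      _ ≤ a * (x * (((b * (x * (b * (a * y)))) * (b * (x * (b * (a * y))))) * a)) :=
          mul_le_mul_right (mul_le_mul_right (mul_le_mul_left (hidem _) _) _) _
      _ = a * (x * (b * (x * (b * (a * (y * (b * ((x * b) * (a * (y * a)))))))))) := by
          simp only [mul_assoc]
      _ ≤ a * (x * (b * (x * (b * (a * (y * (b * (((x * b) * (x * b)) * (a * (y * a)))))))))) := by
          have h : (x * b) * (a * (y * a)) ≤ ((x * b) * (x * b)) * (a * (y * a)) :=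
            mul_le_mul_left (hidem _) _
          exact mul_le_mul_right (mul_le_mul_right (mul_le_mul_right (mul_le_mul_right
            (mul_le_mul_right (mul_le_mul_right (mul_le_mul_right (mul_le_mul_right h b) y) a) b) x) b) x) a
      _ = a * (x * b * x * b * a * y) * b * (x * b * x * b * a * y) * a := by
          simp only [mul_assoc]
  tfae_have 2 → 3 := by
    intro h2 a b c
    obtain ⟨x, hx⟩ := h2 (a * c) (a * b * c)
    refine ⟨c * x * a, ?_⟩
    calc a * c ≤ (a * c) * x * (a * b * c) * x * (a * c) := hx
      _ = a * (c * x * a) * b * (c * x * a) * c := by simp only [mul_assoc]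
  tfae_have 3 → 1 := by
    intro h3 a b
    obtain ⟨x, hx⟩ := h3 a b a
    exact ⟨x, x, le_trans (hidem a) hx⟩
  tfae_finish
end

section
/- An idempotent ordered semigroup S is left zero if and only if it is left simple, i.e., for all a,b ∈ S there exists s ∈ S with a ≤ sb (equivalently (Sa] = S for all a). -/
/-- An idempotent ordered semigroup is left zero iff it is left simple. -/
theorem left_zero_iff_left_simple
    {S : Type*} [Semigroup S] [PartialOrder S]
    [CovariantClass S S (· * ·) (· ≤ ·)]
    [CovariantClass S S (Function.swap (· * ·)) (· ≤ ·)]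
    (hidem : ∀ a : S, a ≤ a * a) :
    (∀ a b : S, ∃ x : S, a ≤ a * x * b) ↔ (∀ a b : S, ∃ s : S, a ≤ s * b) := by
  constructor
  · intro h a b
    obtain ⟨x, hx⟩ := h a b
    exact ⟨a * x, hx⟩
  · intro h a b
    obtain ⟨s, hs⟩ := h a b
    refine ⟨s, ?_⟩
    calc a ≤ a * a := hidem a
    _ ≤ a * (s * b) := mul_le_mul_right hs a
    _ = a * s * b := (mul_assoc a s b).symm
end

section
/- In an idempotent ordered semigroup S, the following are equivalent: (1) for all a,b ∈ S there exists x ∈ S with ab ≤ abxba; (2) for all a,b ∈ S there exists x ∈ S with ab ≤ axbxa; (3) for all a,b ∈ S there exist x,y ∈ S with ab ≤ axbya. -/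
private lemma dup_mid {S : Type*} [Semigroup S] [PartialOrder S]
    [CovariantClass S S (· * ·) (· ≤ ·)]
    [CovariantClass S S (Function.swap (· * ·)) (· ≤ ·)]
    (hidem : ∀ a : S, a ≤ a * a) (P F Q : S) :
    P * F * Q ≤ P * (F * F) * Q :=
  mul_le_mul_left (mul_le_mul_right (hidem F) P) Q

/-- Equivalent forms of left regularity in an idempotent ordered semigroup. -/
theorem left_regular_tfae
    {S : Type*} [Semigroup S] [PartialOrder S]
    [CovariantClass S S (· * ·) (· ≤ ·)]
    [CovariantClass S S (Function.swap (· * ·)) (· ≤ ·)]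
    (hidem : ∀ a : S, a ≤ a * a) :
    List.TFAE
      [∀ a b : S, ∃ x : S, a * b ≤ a * b * x * b * a,
       ∀ a b : S, ∃ x : S, a * b ≤ a * x * b * x * a,
       ∀ a b : S, ∃ x y : S, a * b ≤ a * x * b * y * a] := by
  tfae_have 1 → 3 := by
    intro h a b
    obtain ⟨x, hx⟩ := h a b
    refine ⟨b * x, b, ?_⟩
    calc a * b ≤ a * b * x * b * a := hx
      _ ≤ a * b * x * (b * b) * a := dup_mid hidem _ b a
      _ = a * (b * x) * b * b * a := by simp only [mul_assoc]
  tfae_have 2 → 3 := by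
    intro h a b
    obtain ⟨x, hx⟩ := h a b
    exact ⟨x, x, hx⟩
  tfae_have 3 → 1 := by
    intro h a b
    obtain ⟨x, y, hxy⟩ := h (a * b * a) b
    refine ⟨a * x * b * y * a, ?_⟩
    calc a * b ≤ (a * b) * (a * b) := hidem _
      _ = a * b * a * b := by simp only [mul_assoc]
      _ ≤ a * b * a * x * b * y * (a * b * a) := hxy
      _ = a * b * (a * x * b * y * a) * b * a := by simp only [mul_assoc]
  tfae_have 3 → 2 := by
    intro h a b
    obtain ⟨x, y, hxy⟩ := h a b
    refine ⟨x * b * x * b * y, ?_⟩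
    calc a * b ≤ a * x * b * y * a := hxy
      _ = a * (x * b) * (y * a) := by simp only [mul_assoc]
      _ ≤ a * (x * b * (x * b)) * (y * a) := dup_mid hidem a _ _
      _ = a * x * (b * x * b * y) * a := by simp only [mul_assoc]
      _ ≤ a * x * (b * x * b * y * (b * x * b * y)) * a := dup_mid hidem _ _ a
      _ = a * x * b * x * b * y * b * (x * b) * (y * a) := by simp only [mul_assoc]
      _ ≤ a * x * b * x * b * y * b * (x * b * (x * b)) * (y * a) := dup_mid hidem _ _ _
      _ = a * (x * b * x * b * y) * b * (x * b * x * b * y) * a := by simp only [mul_assoc]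
  tfae_finish
end

section
/- If S is a left regular idempotent ordered semigroup (for all a,b ∈ S there is x ∈ S with ab ≤ axbxa), then the Green relations L and J coincide on S, where a L b iff a ≤ xb and b ≤ ya for some x,y ∈ S¹, and a J b iff a ≤ ubv and b ≤ xay for some u,v,x,y ∈ S¹. -/
section

variable {S : Type*} [Semigroup S] [PartialOrder S]

/-- Green's `L` relation: `a L b` iff `(S¹a] = (S¹b]`, i.e. `a ≤ xb` and
`b ≤ ya` for some `x, y ∈ S¹` (the case `x = 1` giving `a ≤ b`). -/
def GreenL (a b : S) : Prop :=
  (a ≤ b ∨ ∃ x : S, a ≤ x * b) ∧ (b ≤ a ∨ ∃ y : S, b ≤ y * a)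

/-- Green's `J` relation: `a J b` iff `(S¹aS¹] = (S¹bS¹]`. -/
def GreenJ (a b : S) : Prop :=
  (a ≤ b ∨ (∃ u : S, a ≤ u * b) ∨ (∃ v : S, a ≤ b * v) ∨ ∃ u v : S, a ≤ u * b * v) ∧
  (b ≤ a ∨ (∃ x : S, b ≤ x * a) ∨ (∃ y : S, b ≤ a * y) ∨ ∃ x y : S, b ≤ x * a * y)

lemma left_bound_of_J_bound {S : Type*} [Semigroup S] [PartialOrder S]
    [CovariantClass S S (· * ·) (· ≤ ·)]
    (hlr : ∀ a b : S, ∃ x : S, a * b ≤ a * x * b * x * a) {a b : S}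
    (h : a ≤ b ∨ (∃ u : S, a ≤ u * b) ∨ (∃ v : S, a ≤ b * v) ∨ ∃ u v : S, a ≤ u * b * v) :
    a ≤ b ∨ ∃ x : S, a ≤ x * b := by
  rcases h with h | ⟨u, h⟩ | ⟨v, h⟩ | ⟨u, v, h⟩
  · exact Or.inl h
  · exact Or.inr ⟨u, h⟩
  · obtain ⟨x, hx⟩ := hlr b v
    exact Or.inr ⟨b * x * v * x, h.trans hx⟩
  · obtain ⟨x, hx⟩ := hlr b v
    refine Or.inr ⟨u * (b * x * v * x), ?_⟩
    rw [mul_assoc]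
    have : u * (b * v) ≤ u * (b * x * v * x * b) := mul_le_mul_right hx u
    rw [mul_assoc] at h
    exact h.trans (by simpa [mul_assoc] using this)

/-- In a left regular idempotent ordered semigroup, `L = J`. -/
theorem greenL_eq_greenJ_of_left_regular
    [CovariantClass S S (· * ·) (· ≤ ·)]
    [CovariantClass S S (Function.swap (· * ·)) (· ≤ ·)]
    (hidem : ∀ a : S, a ≤ a * a)
    (hlr : ∀ a b : S, ∃ x : S, a * b ≤ a * x * b * x * a) :
    ∀ a b : S, GreenL a b ↔ GreenJ a b := by
  intro a b
  constructor
  · rintro ⟨h1, h2⟩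
    exact ⟨h1.imp id fun ⟨x, hx⟩ => Or.inl ⟨x, hx⟩,
           h2.imp id fun ⟨y, hy⟩ => Or.inl ⟨y, hy⟩⟩
  · rintro ⟨h1, h2⟩
    exact ⟨left_bound_of_J_bound hlr h1, left_bound_of_J_bound hlr h2⟩

end
end

section
/- If an idempotent ordered semigroup S is a semilattice of left zero idempotent ordered semigroups (i.e., there is a semilattice congruence ρ on S each of whose classes is a left zero idempotent ordered subsemigroup), then S is left regular: for all a,b ∈ S there exists x ∈ S with ab ≤ axbxa. -/
/-- If an idempotent ordered semigroup is a semilattice of left zero idempotent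
ordered semigroups, then it is left regular. -/
theorem left_regular_of_semilattice_of_left_zero
    {S : Type*} [Semigroup S] [PartialOrder S]
    [CovariantClass S S (· * ·) (· ≤ ·)]
    [CovariantClass S S (Function.swap (· * ·)) (· ≤ ·)]
    (hidem : ∀ a : S, a ≤ a * a)
    (ρ : S → S → Prop)
    (hequiv : Equivalence ρ)
    (hcongl : ∀ a b c : S, ρ a b → ρ (c * a) (c * b))
    (hcongr : ∀ a b c : S, ρ a b → ρ (a * c) (b * c))
    (hsq : ∀ a : S, ρ a (a * a))
    (hcomm : ∀ a b : S, ρ (a * b) (b * a))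
    (hlz : ∀ a b : S, ρ a b → ∃ x : S, ρ x a ∧ a ≤ a * x * b) :
    ∀ a b : S, ∃ x : S, a * b ≤ a * x * b * x * a := by
  intro a b
  obtain ⟨t, -, hle⟩ := hlz (a * b) (b * a) (hcomm a b)
  refine ⟨b * t * b, ?_⟩
  calc a * b ≤ a * b * t * (b * a) := hle
    _ = a * (b * t * b) * a := by simp only [mul_assoc]
    _ ≤ a * ((b * t * b) * (b * t * b)) * a :=
        mul_le_mul_left (mul_le_mul_right (hidem (b * t * b)) a) a
    _ = a * (b * t * b) * (b * (t * (b * a))) := by simp only [mul_assoc]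
    _ ≤ a * (b * t * b) * ((b * b) * (t * (b * a))) :=
        mul_le_mul_right (mul_le_mul_left (hidem b) _) _
    _ = a * (b * t * b) * b * (b * t * b) * a := by simp only [mul_assoc]
end

section
/- If S is an H-commutative idempotent ordered semigroup (for all a,b ∈ S there is u ∈ S with ab ≤ bua), then for all a,b ∈ S there exist s,t ∈ S such that ab ≤ bast and ab ≤ tsba (i.e., ab ∈ (baS] ∩ (Sba]). -/
/-- In an `H`-commutative idempotent ordered semigroup,
`ab ∈ (baS] ∩ (Sba]` for all `a, b`. -/
theorem hcomm_mem_ideals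
    {S : Type*} [Semigroup S] [PartialOrder S]
    [CovariantClass S S (· * ·) (· ≤ ·)]
    [CovariantClass S S (Function.swap (· * ·)) (· ≤ ·)]
    (hidem : ∀ a : S, a ≤ a * a)
    (hH : ∀ a b : S, ∃ u : S, a * b ≤ b * u * a) :
    ∀ a b : S, ∃ s t : S, a * b ≤ b * a * s * t ∧ a * b ≤ t * s * (b * a) := by
  intro a b
  obtain ⟨u, hu⟩ := hH a b
  obtain ⟨w, hw⟩ := hH u a
  obtain ⟨v, hv⟩ := hH b u
  have hx : a * b ≤ b * a * (w * u) := by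
    calc a * b ≤ b * u * a := hu
      _ = b * (u * a) := by rw [mul_assoc]
      _ ≤ b * (a * w * u) := mul_le_mul_right hw b
      _ = b * a * (w * u) := by simp [mul_assoc]
  have hy : a * b ≤ u * v * (b * a) := by
    calc a * b ≤ b * u * a := hu
      _ ≤ u * v * b * a := mul_le_mul_left hv a
      _ = u * v * (b * a) := by rw [mul_assoc]
  refine ⟨(w * u) * (a * b) * (u * v), b * a, ?_, ?_⟩ <;>
  · calc a * b ≤ (a * b) * (a * b) := hidem _
      _ ≤ (a * b) * ((a * b) * (a * b)) := mul_le_mul_right (hidem _) _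
      _ ≤ (b * a * (w * u)) * ((a * b) * (u * v * (b * a))) :=
          mul_le_mul' hx (mul_le_mul_right hy _)
      _ = _ := by simp [mul_assoc]
end

section
/- If S is an idempotent ordered semigroup that is a semilattice of t-simple idempotent ordered semigroups, then S is H-commutative: for all a,b ∈ S there exists t ∈ S with ab ≤ bta. -/
/-- If an idempotent ordered semigroup is a semilattice of t-simple idempotent
ordered semigroups, then it is `H`-commutative. -/
theorem hcomm_of_semilattice_of_tsimple
    {S : Type*} [Semigroup S] [PartialOrder S]
    [CovariantClass S S (· * ·) (· ≤ ·)]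
    [CovariantClass S S (Function.swap (· * ·)) (· ≤ ·)]
    (hidem : ∀ a : S, a ≤ a * a)
    (ρ : S → S → Prop)
    (hequiv : Equivalence ρ)
    (hcongl : ∀ a b c : S, ρ a b → ρ (c * a) (c * b))
    (hcongr : ∀ a b c : S, ρ a b → ρ (a * c) (b * c))
    (hsq : ∀ a : S, ρ a (a * a))
    (hcomm : ∀ a b : S, ρ (a * b) (b * a))
    (htsimple : ∀ a b : S, ρ a b →
      (∃ x : S, ρ x a ∧ a ≤ x * b) ∧ (∃ y : S, ρ y a ∧ a ≤ b * y)) :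
    ∀ a b : S, ∃ t : S, a * b ≤ b * t * a := by
  intro a b
  obtain ⟨⟨x, -, hx⟩, ⟨y, -, hy⟩⟩ := htsimple (a * b) (b * a) (hcomm a b)
  refine ⟨a * y * x * b, ?_⟩
  calc a * b ≤ (a * b) * (a * b) := hidem _
    _ ≤ (b * a * y) * (x * (b * a)) := mul_le_mul' hy hx
    _ = b * (a * y * x * b) * a := by simp only [mul_assoc]
end

section
/- If S is a normal idempotent ordered semigroup, then for all a,b ∈ S the subsemigroup aSb = {axb : x ∈ S} is weakly commutative within S: for all x,y ∈ S there exists s ∈ aSb with (axb)(ayb) ≤ (ayb)s(axb). -/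
/-- If `S` is a normal idempotent ordered semigroup, then for all `a, b ∈ S`
the subsemigroup `aSb` is weakly commutative. -/
theorem aSb_weakly_commutative_of_normal
    {S : Type*} [Semigroup S] [PartialOrder S]
    [CovariantClass S S (· * ·) (· ≤ ·)]
    [CovariantClass S S (Function.swap (· * ·)) (· ≤ ·)]
    (hidem : ∀ a : S, a ≤ a * a)
    (hnormal : ∀ a b c : S, ∃ x : S, a * b * c * a ≤ a * c * x * b * a) :
    ∀ a b x y : S, ∃ s : S, (∃ w : S, s = a * w * b) ∧
      (a * x * b) * (a * y * b) ≤ (a * y * b) * s * (a * x * b) := by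
  intro a b x y
  obtain ⟨z, hz⟩ := hnormal b (a * y * b * a * x) (b * a * y)
  obtain ⟨w, hw⟩ := hnormal a (x * b * b * a * y * z * a) (y * b)
  set M : S := w * x * b * b * a * y * z * a with hM
  refine ⟨(a * y * b) * M * (a * x * b), ⟨y * b * M * a * x, by simp [mul_assoc]⟩, ?_⟩
  have key : (a * x * b) * (a * y * b) ≤ (a * y * b) * M * (a * x * b) := by
    calc (a * x * b) * (a * y * b)
        ≤ ((a * x * b) * (a * y * b)) * ((a * x * b) * (a * y * b)) := hidem _
      _ = (a * x) * (b * (a * y * b * a * x) * (b * a * y) * b) := by simp [mul_assoc]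
      _ ≤ (a * x) * (b * (b * a * y) * z * (a * y * b * a * x) * b) :=
          mul_le_mul_right hz _
      _ = (a * (x * b * b * a * y * z * a) * (y * b) * a) * (x * b) := by
          simp [mul_assoc]
      _ ≤ (a * (y * b) * w * (x * b * b * a * y * z * a) * a) * (x * b) :=
          mul_le_mul_left hw _
      _ = (a * y * b) * M * (a * x * b) := by simp [hM, mul_assoc]
  calc (a * x * b) * (a * y * b)
      ≤ (a * y * b) * M * (a * x * b) := key
    _ ≤ ((a * y * b) * (a * y * b)) * M * ((a * x * b) * (a * x * b)) :=
        mul_le_mul' (mul_le_mul_left (hidem _) _) (hidem _)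
    _ = (a * y * b) * ((a * y * b) * M * (a * x * b)) * (a * x * b) := by
        simp [mul_assoc]
end

section
/- Let S be an idempotent ordered semigroup such that for every a ∈ S, the set aSa is weakly commutative (for all u,v ∈ aSa there is s ∈ aSa with uv ≤ vsu). Then S is normal: for all a,b,c ∈ S there exists u ∈ S with abca ≤ acuba. -/
/-- If in an idempotent ordered semigroup every `aSa` is weakly commutative,
then `S` is normal. -/
theorem normal_of_aSa_weakly_commutative
    {S : Type*} [Semigroup S] [PartialOrder S]
    [CovariantClass S S (· * ·) (· ≤ ·)]
    [CovariantClass S S (Function.swap (· * ·)) (· ≤ ·)]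
    (hidem : ∀ a : S, a ≤ a * a)
    (hwc : ∀ a u v : S, (∃ x : S, u = a * x * a) → (∃ y : S, v = a * y * a) →
      ∃ s : S, (∃ z : S, s = a * z * a) ∧ u * v ≤ v * s * u) :
    ∀ a b c : S, ∃ u : S, a * b * c * a ≤ a * c * u * b * a := by
  intro a b c
  obtain ⟨s, ⟨z, hz⟩, hle⟩ := hwc a (a * (b*a*b*c*b) * a) (a * (c*b*a*b*c) * a)
    ⟨b*a*b*c*b, rfl⟩ ⟨c*b*a*b*c, rfl⟩
  subst hz
  refine ⟨b*a*b*c*a*a*z*a*a*b*a*b*c, ?_⟩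
  calc a*b*c*a = (a*b)*(c*a) := by simp [mul_assoc]
    _ ≤ ((a*b)*(a*b))*(c*a) := mul_le_mul_left (hidem (a*b)) (c*a)
    _ = a*(b*a*b*c)*a := by simp [mul_assoc]
    _ ≤ a*((b*a*b*c)*(b*a*b*c))*a :=
        mul_le_mul_left (mul_le_mul_right (hidem (b*a*b*c)) a) a
    _ = (a*b*a*b)*(c*b*a)*(b*c*a) := by simp [mul_assoc]
    _ ≤ (a*b*a*b)*((c*b*a)*(c*b*a))*(b*c*a) :=
        mul_le_mul_left (mul_le_mul_right (hidem (c*b*a)) (a*b*a*b)) (b*c*a)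
    _ = (a*b*a*b*c*b)*a*(c*b*a*b*c*a) := by simp [mul_assoc]
    _ ≤ (a*b*a*b*c*b)*(a*a)*(c*b*a*b*c*a) :=
        mul_le_mul_left (mul_le_mul_right (hidem a) (a*b*a*b*c*b)) (c*b*a*b*c*a)
    _ = (a * (b*a*b*c*b) * a) * (a * (c*b*a*b*c) * a) := by simp [mul_assoc]
    _ ≤ (a * (c*b*a*b*c) * a) * (a*z*a) * (a * (b*a*b*c*b) * a) := hle
    _ = a*c*(b*a*b*c*a*a*z*a*a*b*a*b*c)*b*a := by simp [mul_assoc]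
end

section
/- Let S be a left normal idempotent ordered semigroup (for all a,b,c ∈ S there is x ∈ S with abc ≤ acxb). Then the Green's relation L, defined by a L b iff there exist x,y ∈ S with a ≤ xb and b ≤ ya, is a congruence on S satisfying a L a² and ab L ba for all a,b ∈ S (i.e., L is a semilattice congruence). -/
section

variable {S : Type*} [Semigroup S] [PartialOrder S]

/-- Green's `L` relation (within `S`). -/
def GreenLrel (a b : S) : Prop := (∃ x : S, a ≤ x * b) ∧ ∃ y : S, b ≤ y * a

private lemma greenL_aux
    [CovariantClass S S (· * ·) (· ≤ ·)]
    [CovariantClass S S (Function.swap (· * ·)) (· ≤ ·)]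
    (hidem : ∀ a : S, a ≤ a * a)
    (hln : ∀ a b c : S, ∃ x : S, a * b * c ≤ a * c * x * b)
    (a b : S) : ∃ z : S, a * b ≤ z * (b * a) := by
  obtain ⟨x, hx⟩ := hln a (b * a) b
  refine ⟨a * b * x, ?_⟩
  calc a * b ≤ (a * b) * (a * b) := hidem _
    _ = a * (b * a) * b := by simp [mul_assoc]
    _ ≤ a * b * x * (b * a) := hx

/-- In a left normal idempotent ordered semigroup, `L` is a semilattice congruence. -/
theorem greenL_semilattice_congruence_of_left_normal
    [CovariantClass S S (· * ·) (· ≤ ·)]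
    [CovariantClass S S (Function.swap (· * ·)) (· ≤ ·)]
    (hidem : ∀ a : S, a ≤ a * a)
    (hln : ∀ a b c : S, ∃ x : S, a * b * c ≤ a * c * x * b) :
    Equivalence (GreenLrel (S := S)) ∧
    (∀ a b c : S, GreenLrel a b → GreenLrel (c * a) (c * b)) ∧
    (∀ a b c : S, GreenLrel a b → GreenLrel (a * c) (b * c)) ∧
    (∀ a : S, GreenLrel a (a * a)) ∧
    (∀ a b : S, GreenLrel (a * b) (b * a)) := by
  have hrefl : ∀ a : S, GreenLrel a a := fun a => ⟨⟨a, hidem a⟩, ⟨a, hidem a⟩⟩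
  have hsymm : ∀ {a b : S}, GreenLrel a b → GreenLrel b a := fun h => ⟨h.2, h.1⟩
  have htrans : ∀ {a b c : S}, GreenLrel a b → GreenLrel b c → GreenLrel a c := by
    rintro a b c ⟨⟨x, hx⟩, ⟨y, hy⟩⟩ ⟨⟨u, hu⟩, ⟨v, hv⟩⟩
    refine ⟨⟨x * u, ?_⟩, ⟨v * y, ?_⟩⟩
    · calc a ≤ x * b := hx
        _ ≤ x * (u * c) := mul_le_mul_right hu x
        _ = x * u * c := (mul_assoc ..).symm
    · calc c ≤ v * b := hv
        _ ≤ v * (y * a) := mul_le_mul_right hy v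
        _ = v * y * a := (mul_assoc ..).symm
  have hcomm : ∀ a b : S, GreenLrel (a * b) (b * a) := fun a b =>
    ⟨greenL_aux hidem hln a b, greenL_aux hidem hln b a⟩
  have hright : ∀ a b c : S, GreenLrel a b → GreenLrel (a * c) (b * c) := by
    rintro a b c ⟨⟨x, hx⟩, ⟨y, hy⟩⟩
    refine ⟨⟨x, ?_⟩, ⟨y, ?_⟩⟩
    · calc a * c ≤ x * b * c := mul_le_mul_left hx c
        _ = x * (b * c) := mul_assoc ..
    · calc b * c ≤ y * a * c := mul_le_mul_left hy c
        _ = y * (a * c) := mul_assoc ..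
  have hleft : ∀ a b c : S, GreenLrel a b → GreenLrel (c * a) (c * b) := by
    intro a b c h
    exact htrans (hcomm c a) (htrans (hright a b c h) (hcomm b c))
  refine ⟨⟨hrefl, hsymm, htrans⟩, hleft, hright, ?_, hcomm⟩
  intro a
  exact ⟨⟨a, le_trans (hidem a) (mul_le_mul_right (hidem a) a)⟩, ⟨a, le_refl _⟩⟩

end
end

section
/- Let B be a band, S an idempotent ordered semigroup in which every pair of elements has a join (sup) that distributes over multiplication, and f : B → S a semigroup homomorphism. Then φ : P_f(B) → S defined by φ(A) = ⋁_{a∈A} f(a) is an ordered semigroup homomorphism (φ(AB) = φ(A)φ(B) and A ⊆ B implies φ(A) ≤ φ(B)), and φ({x}) = f(x) for all x ∈ B. -/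
open Pointwise

/-- If `B` is a band, `S` a semilattice-ordered idempotent ordered semigroup
(joins exist and multiplication distributes over them), and `f : B → S` a
semigroup homomorphism, then `φ(A) = ⋁_{a ∈ A} f a` defines an ordered
semigroup homomorphism `P_f(B) → S` with `φ ∘ {·} = f`. -/
theorem pf_universal_property
    {B S : Type*} [Semigroup B] [DecidableEq B]
    [Semigroup S] [SemilatticeSup S]
    [CovariantClass S S (· * ·) (· ≤ ·)]
    [CovariantClass S S (Function.swap (· * ·)) (· ≤ ·)]
    (hidem : ∀ a : S, a ≤ a * a)
    (hdistl : ∀ a b c : S, a * (b ⊔ c) = a * b ⊔ a * c)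
    (hdistr : ∀ a b c : S, (a ⊔ b) * c = a * c ⊔ b * c)
    (hband : ∀ x : B, x * x = x)
    (f : B → S) (hf : ∀ x y : B, f (x * y) = f x * f y) :
    (∀ (A C : Finset B) (hA : A.Nonempty) (hC : C.Nonempty),
        (A * C).sup' (hA.mul hC) f = A.sup' hA f * C.sup' hC f) ∧
    (∀ (A C : Finset B) (hA : A.Nonempty) (hC : C.Nonempty),
        A ⊆ C → A.sup' hA f ≤ C.sup' hC f) ∧
    (∀ x : B, ({x} : Finset B).sup' (Finset.singleton_nonempty x) f = f x) := by
  have hmul : ∀ (c : S) (A : Finset B) (hA : A.Nonempty),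
      c * A.sup' hA f = A.sup' hA (fun a => c * f a) := by
    intro c A hA
    induction hA using Finset.Nonempty.cons_induction with
    | singleton a => simp
    | cons a A ha hA ih =>
      rw [Finset.sup'_cons, Finset.sup'_cons, hdistl, ih]
      all_goals exact hA
  have hmul' : ∀ (c : S) (A : Finset B) (hA : A.Nonempty),
      A.sup' hA f * c = A.sup' hA (fun a => f a * c) := by
    intro c A hA
    induction hA using Finset.Nonempty.cons_induction with
    | singleton a => simp
    | cons a A ha hA ih =>
      rw [Finset.sup'_cons, Finset.sup'_cons, hdistr, ih]
      all_goals exact hA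
  refine ⟨?_, ?_, fun x => by simp⟩
  · intro A C hA hC
    apply le_antisymm
    · apply Finset.sup'_le
      intro b hb
      obtain ⟨a, ha, c, hc, rfl⟩ := Finset.mem_mul.mp hb
      rw [hf]
      exact mul_le_mul' (Finset.le_sup' f ha) (Finset.le_sup' f hc)
    · rw [hmul', Finset.sup'_le_iff]
      intro a ha
      rw [hmul, Finset.sup'_le_iff]
      intro c hc
      rw [← hf]
      exact Finset.le_sup' f (Finset.mul_mem_mul ha hc)
  · intro A C hA hC hsub
    exact Finset.sup'_le hA f fun a ha => Finset.le_sup' f (hsub ha)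
end

section
/- In an idempotent ordered semigroup S that is left regular (for all a,b there is x with ab ≤ axbxa), each L-class is a subsemigroup which is left zero: for a,b in the same L-class there exists u in that L-class with a ≤ aub. -/
/-- In a left regular idempotent ordered semigroup, each `L`-class is a
subsemigroup which is left zero: `a L b` implies `ab L a` and there is
`u` with `u L a` and `a ≤ aub`.  Here `a L b` iff `a ≤ xb` and `b ≤ ya`
for some `x, y ∈ S`. -/
theorem Lclass_left_zero_of_left_regular
    {S : Type*} [Semigroup S] [PartialOrder S]
    [CovariantClass S S (· * ·) (· ≤ ·)]
    [CovariantClass S S (Function.swap (· * ·)) (· ≤ ·)]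
    (hidem : ∀ a : S, a ≤ a * a)
    (hlr : ∀ a b : S, ∃ x : S, a * b ≤ a * x * b * x * a)
    (a b : S)
    (hab : (∃ x : S, a ≤ x * b) ∧ ∃ y : S, b ≤ y * a) :
    ((∃ x : S, a * b ≤ x * a) ∧ ∃ y : S, a ≤ y * (a * b)) ∧
    ∃ u : S, ((∃ x : S, u ≤ x * a) ∧ ∃ y : S, a ≤ y * u) ∧ a ≤ a * u * b := by
  obtain ⟨⟨x, hx⟩, ⟨y, hy⟩⟩ := hab
  -- a ≤ a * x * b
  have haxb : a ≤ a * x * b := by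
    calc a ≤ a * a := hidem a
      _ ≤ a * (x * b) := mul_le_mul_right hx a
      _ = a * x * b := (mul_assoc _ _ _).symm
  -- b ≤ y * a * b
  have hyab : b ≤ y * a * b := by
    calc b ≤ b * b := hidem b
      _ ≤ y * a * b := mul_le_mul_left hy b
  -- a ≤ x * y * a  (i.e. a ≤ u for u := x * y * a)
  have hau : a ≤ x * y * a := by
    calc a ≤ x * b := hx
      _ ≤ x * (y * a) := mul_le_mul_right hy x
      _ = x * y * a := (mul_assoc _ _ _).symm
  -- a ≤ a * (x * y * a) * b
  have key : a ≤ a * (x * y * a) * b := by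
    calc a ≤ a * x * b := haxb
      _ ≤ a * x * (y * a * b) := mul_le_mul_right hyab _
      _ = a * (x * y * a) * b := by simp only [mul_assoc]
  refine ⟨⟨⟨a * y, ?_⟩, ⟨a * x * y, ?_⟩⟩, ⟨x * y * a, ⟨⟨x * y, le_refl _⟩,
    ⟨x * y * a, le_trans hau (hidem _)⟩⟩, key⟩⟩
  · calc a * b ≤ a * (y * a) := mul_le_mul_right hy a
      _ = a * y * a := (mul_assoc _ _ _).symm
  · calc a ≤ a * x * b := haxb
      _ ≤ a * x * (y * a * b) := mul_le_mul_right hyab _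
      _ = a * x * y * (a * b) := by simp only [mul_assoc]
end
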